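/- arXiv:2303.12824 — 2 statements merged into one kernel-verified Lean document; each statement's English description precedes it below -/
import Mathlib

section
/- Consider the triangular prism: the graph on vertices {1,…,6} with triangles {1,2,3} and {4,5,6} and matching edges {1,4}, {2,5}, {3,6}. Let f be the proper 3-coloring with color classes {1,5}, {2,6}, {3,4} and g the proper 3-coloring with color classes {1,6}, {2,4}, {3,5}. Then f and g are not Kempe equivalent (with respect to 3 colors). -/
open SimpleGraph

/-- `f` is a proper `k`-coloring of `G`. -/
def IsProperColoring {V : Type} (G : SimpleGraph V) (k : ℕ) (f : V → Fin k) : Prop :=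
  ∀ ⦃u v : V⦄, G.Adj u v → f u ≠ f v

/-- `C` is a connected component of the subgraph of `G` induced on `f⁻¹(i) ∪ f⁻¹(j)`. -/
def IsKempeComponent {V : Type} (G : SimpleGraph V) {k : ℕ} (f : V → Fin k)
    (i j : Fin k) (C : Set V) : Prop :=
  ∃ (w : V) (hw : w ∈ {v | f v = i ∨ f v = j}),
    C = {x | ∃ hx : x ∈ {v | f v = i ∨ f v = j},
      (G.induce {v | f v = i ∨ f v = j}).Reachable ⟨w, hw⟩ ⟨x, hx⟩}

/-- `g` is obtained from `f` by a Kempe switching: swapping colors `i ≠ j` on a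
connected component `C` of the subgraph induced on the two color classes. -/
def KempeStep {V : Type} (G : SimpleGraph V) {k : ℕ} (f g : V → Fin k) : Prop :=
  ∃ (i j : Fin k) (C : Set V), i ≠ j ∧ IsKempeComponent G f i j C ∧
    (∀ x, x ∉ C → g x = f x) ∧
    (∀ x ∈ C, (f x = i → g x = j) ∧ (f x = j → g x = i))

/-- Kempe equivalence: a finite sequence of Kempe switchings. -/
def KempeEquiv {V : Type} (G : SimpleGraph V) {k : ℕ} (f g : V → Fin k) : Prop :=
  Relation.ReflTransGen (KempeStep G) f g

/-- The replication graph `G_a`: each vertex `i` of `G` is replaced by a clique of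
`a i` vertices, with complete joins between cliques along edges of `G`. -/
def replication {n : ℕ} (G : SimpleGraph (Fin n)) (a : Fin n → ℕ) :
    SimpleGraph (Σ i : Fin n, Fin (a i)) where
  Adj x y := x ≠ y ∧ (x.1 = y.1 ∨ G.Adj x.1 y.1)
  symm := by
    constructor
    rintro x y ⟨hne, h⟩
    refine ⟨hne.symm, ?_⟩
    rcases h with h | h
    · exact Or.inl h.symm
    · exact Or.inr h.symm
  loopless := by constructor; rintro x ⟨hne, _⟩; exact hne rfl

/-- The triangular prism `K₃ □ K₂`. -/
def prism : SimpleGraph (Fin 3 × Fin 2) :=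
  (⊤ : SimpleGraph (Fin 3)).boxProd (⊤ : SimpleGraph (Fin 2))

/-
In the first coloring any two color classes together span a path on four vertices, which is
connected; the same then holds for every coloring `σ ∘ f` obtained by permuting its colors.
So every Kempe switching swaps two colors globally, and the Kempe class of the first
coloring consists of its color permutations. The second coloring agrees with the first on
the top triangle but not on the bottom one, so it is not of this form.
-/

namespace SimpleGraph

variable {V : Type} {G : SimpleGraph V}

lemma induce_reachable_of_eq_or_adj {s : Set V} {x y : V} (hx : x ∈ s) (hy : y ∈ s)
    (h : x = y ∨ G.Adj x y) : (G.induce s).Reachable ⟨x, hx⟩ ⟨y, hy⟩ := by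
  rcases h with rfl | h
  · rfl
  · exact Adj.reachable (G := G.induce s) h

lemma induce_preconnected_of_forall_exists_walk_three {s : Set V}
    (h : ∀ x ∈ s, ∀ y ∈ s, ∃ z ∈ s, ∃ z' ∈ s,
      (x = z ∨ G.Adj x z) ∧ (z = z' ∨ G.Adj z z') ∧ (z' = y ∨ G.Adj z' y)) :
    (G.induce s).Preconnected := by
  rintro ⟨x, hx⟩ ⟨y, hy⟩
  obtain ⟨z, hz, z', hz', hxz, hzz', hz'y⟩ := h x hx y hy
  exact ((induce_reachable_of_eq_or_adj hx hz hxz).trans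
    (induce_reachable_of_eq_or_adj hz hz' hzz')).trans (induce_reachable_of_eq_or_adj hz' hy hz'y)

end SimpleGraph

section Kempe

variable {V : Type} {G : SimpleGraph V} {k : ℕ}

def KempeConnected (G : SimpleGraph V) (f : V → Fin k) : Prop :=
  ∀ i j, i ≠ j → (G.induce {v | f v = i ∨ f v = j}).Preconnected

lemma KempeConnected.perm_comp {f : V → Fin k} (hf : KempeConnected G f)
    (σ : Equiv.Perm (Fin k)) : KempeConnected G (σ ∘ f) := by
  intro i j hij
  have hs : {v | (σ ∘ f) v = i ∨ (σ ∘ f) v = j} = {v | f v = σ.symm i ∨ f v = σ.symm j} := by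
    ext v
    simp only [Set.mem_ofPred, Function.comp_apply, Equiv.eq_symm_apply]
  rw [hs]
  exact hf _ _ (σ.symm.injective.ne hij)

lemma KempeStep.exists_eq_swap_comp {f g : V → Fin k} (hf : KempeConnected G f)
    (h : KempeStep G f g) : ∃ i j, g = Equiv.swap i j ∘ f := by
  obtain ⟨i, j, C, hij, ⟨w, hw, rfl⟩, hout, hin⟩ := h
  refine ⟨i, j, funext fun x => ?_⟩
  by_cases hx : f x = i ∨ f x = j
  · have hxC : x ∈ {x | ∃ hx : f x = i ∨ f x = j, _} := ⟨hx, hf i j hij ⟨w, hw⟩ ⟨x, hx⟩⟩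
    rcases hx with hxi | hxj
    · rw [(hin x hxC).1 hxi, Function.comp_apply, hxi, Equiv.swap_apply_left]
    · rw [(hin x hxC).2 hxj, Function.comp_apply, hxj, Equiv.swap_apply_right]
  · push Not at hx
    rw [hout x fun ⟨hx', _⟩ => hx'.elim hx.1 hx.2, Function.comp_apply,
      Equiv.swap_apply_of_ne_of_ne hx.1 hx.2]

lemma KempeEquiv.exists_perm_comp {f g : V → Fin k} (hf : KempeConnected G f)
    (h : KempeEquiv G f g) : ∃ σ : Equiv.Perm (Fin k), g = σ ∘ f := by
  induction h with
  | refl => exact ⟨1, rfl⟩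
  | tail _ hstep ih =>
    obtain ⟨σ, rfl⟩ := ih
    obtain ⟨i, j, rfl⟩ := hstep.exists_eq_swap_comp (hf.perm_comp σ)
    exact ⟨Equiv.swap i j * σ, rfl⟩

end Kempe

instance : DecidableRel prism.Adj := fun _ _ =>
  decidable_of_iff _ boxProd_adj.symm

set_option synthInstance.maxSize 1024 in
lemma prism_kempeConnected :
    KempeConnected prism (fun v : Fin 3 × Fin 2 => if v.2 = 0 then v.1 else v.1 + 2) := by
  intro i j hij
  apply induce_preconnected_of_forall_exists_walk_three
  simp only [Set.mem_ofPred]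
  revert i j
  decide

/-- the two proper 3-colorings of the triangular prism with color
classes `{1,5},{2,6},{3,4}` resp. `{1,6},{2,4},{3,5}` are proper and not Kempe
equivalent. -/
theorem stmt9 :
    IsProperColoring prism 3 (fun v => if v.2 = 0 then v.1 else v.1 + 2) ∧
    IsProperColoring prism 3 (fun v => if v.2 = 0 then v.1 else v.1 + 1) ∧
    ¬ KempeEquiv prism (fun v => if v.2 = 0 then v.1 else v.1 + 2)
        (fun v => if v.2 = 0 then v.1 else v.1 + 1) := by
  refine ⟨by unfold IsProperColoring; decide, by unfold IsProperColoring; decide, fun h => ?_⟩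
  obtain ⟨σ, hσ⟩ := h.exists_perm_comp prism_kempeConnected
  have h00 : (0 : Fin 3) = σ 0 := congrFun hσ (0, 0)
  have h11 : (2 : Fin 3) = σ 0 := congrFun hσ (1, 1)
  exact absurd (h00.trans h11.symm) (by decide)
end

section
/- Let G be a graph whose vertex set admits a perfect ordering < (i.e., G contains no induced path a–b–c–d with a < b and d < c), and let a ∈ ℤ_{≥0}ⁿ be arbitrary. Order the vertices of the replication graph G_a so that x < y whenever x ∈ G^{(i)}, y ∈ G^{(j)} with i < j (and vertices within each clique ordered arbitrarily). Then this ordering of G_a contains no induced path x₁–x₂–x₃–x₄ with x₁ < x₂ and x₄ < x₃; i.e., G_a is perfectly orderable. -/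
open SimpleGraph

/-- `x₁–x₂–x₃–x₄` is an induced path `P₄` in `H`. -/
def IsInducedP4 {V : Type} (H : SimpleGraph V) (x₁ x₂ x₃ x₄ : V) : Prop :=
  H.Adj x₁ x₂ ∧ H.Adj x₂ x₃ ∧ H.Adj x₃ x₄ ∧
    ¬ H.Adj x₁ x₃ ∧ ¬ H.Adj x₁ x₄ ∧ ¬ H.Adj x₂ x₄

namespace replication

variable {n : ℕ} {G : SimpleGraph (Fin n)} {a : Fin n → ℕ} {x y z : Σ i : Fin n, Fin (a i)}

theorem adj_of_fst_eq (hyz : (replication G a).Adj y z) (hxy : x.1 = y.1) (hxz : x ≠ z) :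
    (replication G a).Adj x z := by
  obtain ⟨-, h | h⟩ := hyz
  · exact ⟨hxz, .inl (hxy.trans h)⟩
  · exact ⟨hxz, .inr (hxy ▸ h)⟩

theorem adj_fst (h : (replication G a).Adj x y) (hxy : x.1 ≠ y.1) : G.Adj x.1 y.1 :=
  h.2.resolve_left hxy

theorem not_adj_fst (h : ¬ (replication G a).Adj x y) (hxy : x ≠ y) : ¬ G.Adj x.1 y.1 :=
  fun hG => h ⟨hxy, .inr hG⟩

end replication

namespace IsInducedP4

variable {V : Type} {H : SimpleGraph V} {x₁ x₂ x₃ x₄ : V}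

theorem ne₁₃ (h : IsInducedP4 H x₁ x₂ x₃ x₄) : x₁ ≠ x₃ := by
  rintro rfl; exact h.2.2.2.2.1 h.2.2.1

theorem ne₁₄ (h : IsInducedP4 H x₁ x₂ x₃ x₄) : x₁ ≠ x₄ := by
  rintro rfl; exact h.2.2.2.1 h.2.2.1.symm

theorem ne₂₄ (h : IsInducedP4 H x₁ x₂ x₃ x₄) : x₂ ≠ x₄ := by
  rintro rfl; exact h.2.2.2.2.1 h.1

section replication

variable {n : ℕ} {G : SimpleGraph (Fin n)} {a : Fin n → ℕ} {x₁ x₂ x₃ x₄ : Σ i : Fin n, Fin (a i)}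

/-- Vertices of one clique are true twins in `G_a`, and no two vertices of an induced `P₄`
are true twins; so consecutive vertices of the path lie in different cliques. -/
theorem fst_ne_of_replication (h : IsInducedP4 (replication G a) x₁ x₂ x₃ x₄) :
    x₁.1 ≠ x₂.1 ∧ x₂.1 ≠ x₃.1 ∧ x₃.1 ≠ x₄.1 := by
  have ⟨_, h₂₃, h₃₄, h₁₃, _, h₂₄⟩ := h
  refine ⟨fun e => h₁₃ ?_, fun e => h₂₄ ?_, fun e => h₂₄ (.symm ?_)⟩
  · exact replication.adj_of_fst_eq h₂₃ e h.ne₁₃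
  · exact replication.adj_of_fst_eq h₃₄ e h.ne₂₄
  · exact replication.adj_of_fst_eq h₂₃.symm e.symm h.ne₂₄.symm

theorem of_replication (h : IsInducedP4 (replication G a) x₁ x₂ x₃ x₄) :
    IsInducedP4 G x₁.1 x₂.1 x₃.1 x₄.1 := by
  obtain ⟨n₁₂, n₂₃, n₃₄⟩ := h.fst_ne_of_replication
  exact ⟨replication.adj_fst h.1 n₁₂, replication.adj_fst h.2.1 n₂₃,
    replication.adj_fst h.2.2.1 n₃₄, replication.not_adj_fst h.2.2.2.1 h.ne₁₃,
    replication.not_adj_fst h.2.2.2.2.1 h.ne₁₄, replication.not_adj_fst h.2.2.2.2.2 h.ne₂₄⟩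

end replication

end IsInducedP4

theorem lt_of_lt_of_compat {α ι β γ : Type*} [LinearOrder β] [Preorder γ] {p : α → ι}
    {ord : ι → β} {ord' : α → γ} (hord : Function.Injective ord)
    (hcompat : ∀ x y, ord (p x) < ord (p y) → ord' x < ord' y) {x y : α} (hxy : p x ≠ p y)
    (h : ord' x < ord' y) : ord (p x) < ord (p y) :=
  (hord.ne hxy).lt_or_gt.resolve_right fun h' => (hcompat y x h').asymm h

theorem stmt18_general {n : ℕ} (G : SimpleGraph (Fin n)) (ord : Fin n → ℕ)
    (hord : Function.Injective ord)
    (hperf : ∀ a b c d : Fin n, IsInducedP4 G a b c d →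
      ¬ (ord a < ord b ∧ ord d < ord c))
    (a : Fin n → ℕ) (ord' : (Σ i : Fin n, Fin (a i)) → ℕ)
    (hcompat : ∀ x y : Σ i : Fin n, Fin (a i), ord x.1 < ord y.1 → ord' x < ord' y) :
    ∀ x₁ x₂ x₃ x₄ : Σ i : Fin n, Fin (a i),
      IsInducedP4 (replication G a) x₁ x₂ x₃ x₄ →
      ¬ (ord' x₁ < ord' x₂ ∧ ord' x₄ < ord' x₃) := by
  rintro x₁ x₂ x₃ x₄ h ⟨h₁₂, h₄₃⟩
  obtain ⟨n₁₂, -, n₃₄⟩ := h.fst_ne_of_replication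
  exact hperf _ _ _ _ h.of_replication
    ⟨lt_of_lt_of_compat hord hcompat n₁₂ h₁₂, lt_of_lt_of_compat hord hcompat n₃₄.symm h₄₃⟩

/-- if `G` has a perfect ordering (no induced `P₄` `a–b–c–d` with
`a < b` and `d < c`, Chvátal's characterization), then any ordering of the
replication graph `G_a` which puts `G^(i)` before `G^(j)` whenever `i < j`
(vertices within each clique ordered arbitrarily) has no such ordered induced
`P₄` either; i.e. `G_a` is perfectly orderable. -/
theorem stmt18 {n : ℕ} (G : SimpleGraph (Fin n)) (ord : Fin n → ℕ)
    (hord : Function.Injective ord)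
    (hperf : ∀ a b c d : Fin n, IsInducedP4 G a b c d →
      ¬ (ord a < ord b ∧ ord d < ord c))
    (a : Fin n → ℕ) (ord' : (Σ i : Fin n, Fin (a i)) → ℕ)
    (hord' : Function.Injective ord')
    (hcompat : ∀ x y : Σ i : Fin n, Fin (a i), ord x.1 < ord y.1 → ord' x < ord' y) :
    ∀ x₁ x₂ x₃ x₄ : Σ i : Fin n, Fin (a i),
      IsInducedP4 (replication G a) x₁ x₂ x₃ x₄ →
      ¬ (ord' x₁ < ord' x₂ ∧ ord' x₄ < ord' x₃) :=
  stmt18_general G ord hord hperf a ord' hcompat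
end
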